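/- Let c > 0, n ∈ ℝ, v ∈ ℝ³, γ = √(1 + ‖v‖²/c²), and fix a direction index d ∈ {1,2,3}. Define the 4×4 real matrix A_d by: (A_d)_{1,1} = −v_d/γ; for j = 1,2,3, (A_d)_{1,1+j} = −(n/γ)·δ_{dj} + n·v_d·v_j/(c²·γ³) (with δ the Kronecker delta); (A_d)_{1+j,1+j} = −v_d/γ for j = 1,2,3; and all remaining entries zero. Then the characteristic polynomial of A_d equals (X + v_d/γ)⁴; in particular −v_d/γ is the only eigenvalue of A_d. -/

import Mathlib

/-- The flux Jacobian matrix `A_d` of the cold relativistic fluid system in the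
primitive variables `(n, v)`, for the direction `d` (Appendix A), with
`γ = √(1 + ‖v‖²/c²)`. -/
noncomputable def fluxJac (c nn : ℝ) (v : EuclideanSpace ℝ (Fin 3)) (d : Fin 3) :
    Matrix (Fin 4) (Fin 4) ℝ :=
  let γ : ℝ := Real.sqrt (1 + ‖v‖ ^ 2 / c ^ 2)
  !![-(v d / γ),
      -(nn / γ) * (if d = 0 then 1 else 0) + nn * v d * v 0 / (c ^ 2 * γ ^ 3),
      -(nn / γ) * (if d = 1 then 1 else 0) + nn * v d * v 1 / (c ^ 2 * γ ^ 3),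
      -(nn / γ) * (if d = 2 then 1 else 0) + nn * v d * v 2 / (c ^ 2 * γ ^ 3);
    0, -(v d / γ), 0, 0;
    0, 0, -(v d / γ), 0;
    0, 0, 0, -(v d / γ)]

open Polynomial in
/-- Characteristic polynomial of a 4×4 matrix which is a scalar on the diagonal
plus arbitrary off-diagonal entries in the first row. -/
lemma charpoly_aux (x b c e : ℝ) :
    (!![x, b, c, e; 0, x, 0, 0; 0, 0, x, 0; 0, 0, 0, x] : Matrix (Fin 4) (Fin 4) ℝ).charpoly
      = (X - C x) ^ 4 := by
  have h : Matrix.charmatrix (!![x, b, c, e; 0, x, 0, 0; 0, 0, x, 0; 0, 0, 0, x] :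
      Matrix (Fin 4) (Fin 4) ℝ)
      = !![X - C x, -C b, -C c, -C e; 0, X - C x, 0, 0;
           0, 0, X - C x, 0; 0, 0, 0, X - C x] := by
    ext i j
    fin_cases i <;> fin_cases j <;>
      simp [Matrix.charmatrix_apply, Matrix.diagonal, Matrix.vecHead, Matrix.vecTail]
  rw [Matrix.charpoly, h]
  simp [Matrix.det_succ_row_zero, Fin.sum_univ_succ, Fin.succAbove]
  ring

/-- Membership in the spectrum of a real matrix is equivalent to being a root of the
characteristic polynomial. -/
lemma mem_spectrum_iff_isRoot_charpoly {n : Type*} [Fintype n] [DecidableEq n]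
    (M : Matrix n n ℝ) (μ : ℝ) :
    μ ∈ spectrum ℝ M ↔ M.charpoly.IsRoot μ := by
  rw [spectrum.mem_iff, Matrix.isUnit_iff_isUnit_det, isUnit_iff_ne_zero, not_not,
    Polynomial.IsRoot, Matrix.charpoly, eval_det, Matrix.matPolyEquiv_charmatrix]
  simp [Matrix.scalar, algebraMap]

/-- The characteristic polynomial of the flux Jacobian `A_d` is `(X + v_d/γ)⁴`;
in particular `−v_d/γ` is the only eigenvalue of `A_d`. -/
theorem stmt_15 (c : ℝ) (hc : 0 < c) (nn : ℝ)
    (v : EuclideanSpace ℝ (Fin 3)) (d : Fin 3) :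
    (fluxJac c nn v d).charpoly
        = (Polynomial.X + Polynomial.C (v d / Real.sqrt (1 + ‖v‖ ^ 2 / c ^ 2))) ^ 4
      ∧ spectrum ℝ (fluxJac c nn v d)
          = {-(v d / Real.sqrt (1 + ‖v‖ ^ 2 / c ^ 2))} := by
  set a : ℝ := v d / Real.sqrt (1 + ‖v‖ ^ 2 / c ^ 2) with ha
  have hcp : (fluxJac c nn v d).charpoly = (Polynomial.X + Polynomial.C a) ^ 4 := by
    have := charpoly_aux (-a)
      (-(nn / Real.sqrt (1 + ‖v‖ ^ 2 / c ^ 2)) * (if d = 0 then 1 else 0)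
        + nn * v d * v 0 / (c ^ 2 * Real.sqrt (1 + ‖v‖ ^ 2 / c ^ 2) ^ 3))
      (-(nn / Real.sqrt (1 + ‖v‖ ^ 2 / c ^ 2)) * (if d = 1 then 1 else 0)
        + nn * v d * v 1 / (c ^ 2 * Real.sqrt (1 + ‖v‖ ^ 2 / c ^ 2) ^ 3))
      (-(nn / Real.sqrt (1 + ‖v‖ ^ 2 / c ^ 2)) * (if d = 2 then 1 else 0)
        + nn * v d * v 2 / (c ^ 2 * Real.sqrt (1 + ‖v‖ ^ 2 / c ^ 2) ^ 3))
    rw [map_neg, sub_neg_eq_add] at this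
    exact this
  refine ⟨hcp, ?_⟩
  ext μ
  rw [Set.mem_singleton_iff, mem_spectrum_iff_isRoot_charpoly, hcp]
  simp only [Polynomial.IsRoot, Polynomial.eval_pow, Polynomial.eval_add, Polynomial.eval_X,
    Polynomial.eval_C, pow_eq_zero_iff (by norm_num : (4 : ℕ) ≠ 0)]
  constructor
  · intro h; linarith
  · intro h; rw [h]; ring
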